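/- arXiv:2605.25491 — 8 statements merged into one kernel-verified Lean document; each statement's English description precedes it below -/
import Mathlib

section
/- Let α ∈ (0,1] and let 0 ≤ s_1 < s_2 < ⋯ < s_n be real numbers with s_{i+1} - s_i ≥ α for all i ∈ {1,…,n-1}. Then for every i ∈ {1,…,n}, ∑_{j=1}^n exp(-(s_i - s_j)^2) ≤ (1 + √π)/α; in particular the maximum over i of these sums is at most (1 + √π)/α. -/
open Real MeasureTheory intervalIntegral

lemma icc_eq_map (N : ℕ) :
    (Finset.Icc 1 N) = (Finset.range N).map ⟨Nat.succ, Nat.succ_injective⟩ := by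
  ext x
  simp only [Finset.mem_Icc, Finset.mem_map, Finset.mem_range,
    Function.Embedding.coeFn_mk, Nat.succ_eq_add_one]
  constructor
  · rintro ⟨h1, h2⟩
    exact ⟨x - 1, by omega, by omega⟩
  · rintro ⟨a, ha, rfl⟩
    omega

-- tail bound: ∑_{k=1}^N exp(-(αk)²) ≤ √π/(2α)
lemma tail_bound (α : ℝ) (hα0 : 0 < α) (N : ℕ) :
    ∑ k ∈ Finset.Icc 1 N, Real.exp (-(α * k) ^ 2) ≤ Real.sqrt π / (2 * α) := by
  have hcont : Continuous fun t : ℝ => Real.exp (-t ^ 2) := by continuity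
  have hint : ∀ a b : ℝ, IntervalIntegrable (fun t : ℝ => Real.exp (-t ^ 2)) volume a b :=
    fun a b => hcont.intervalIntegrable a b
  have key : ∀ k : ℕ, 1 ≤ k →
      α * Real.exp (-(α * k) ^ 2) ≤ ∫ t in (α * (k - 1 : ℕ))..(α * k), Real.exp (-t ^ 2) := by
    intro k hk
    have hle : α * ((k : ℝ) - 1) ≤ α * k := by
      have : (k : ℝ) - 1 ≤ k := by linarith
      nlinarith
    have hcast : ((k - 1 : ℕ) : ℝ) = (k : ℝ) - 1 := by
      have := Nat.cast_sub hk (R := ℝ); simpa using this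
    rw [hcast]
    have h1 : α * Real.exp (-(α * k) ^ 2)
        = ∫ _ in (α * ((k : ℝ) - 1))..(α * k), Real.exp (-(α * k) ^ 2) := by
      rw [intervalIntegral.integral_const, smul_eq_mul]
      ring
    rw [h1]
    apply intervalIntegral.integral_mono_on hle (intervalIntegrable_const) (hint _ _)
    intro t ht
    apply Real.exp_le_exp.2
    have hk1 : (1:ℝ) ≤ k := by exact_mod_cast hk
    have ht0 : 0 ≤ t := le_trans (by nlinarith : (0:ℝ) ≤ α * ((k:ℝ)-1)) ht.1
    nlinarith [ht.2]
  have sum_le : α * ∑ k ∈ Finset.Icc 1 N, Real.exp (-(α * k) ^ 2)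
      ≤ ∫ t in (0 : ℝ)..(α * N), Real.exp (-t ^ 2) := by
    rw [Finset.mul_sum]
    have := intervalIntegral.sum_integral_adjacent_intervals
      (a := fun k : ℕ => α * k) (n := N) (f := fun t : ℝ => Real.exp (-t ^ 2))
      (μ := volume) (fun k _ => hint _ _)
    simp only [Nat.cast_zero, mul_zero] at this
    rw [← this]
    rw [icc_eq_map N]
    rw [Finset.sum_map]
    apply Finset.sum_le_sum
    intro k _
    have := key (k + 1) (Nat.le_add_left 1 k)
    simpa using this
  have int_le : ∫ t in (0 : ℝ)..(α * N), Real.exp (-t ^ 2) ≤ Real.sqrt π / 2 := by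
    have hend : (0:ℝ) ≤ α * N := by positivity
    rw [intervalIntegral.integral_of_le hend]
    have hint2 : IntegrableOn (fun t : ℝ => Real.exp (-t ^ 2)) (Set.Ioi 0) volume := by
      have := (integrableOn_Ioi_exp_neg_mul_sq_iff (b := (1:ℝ))).2 one_pos
      simpa using this
    calc ∫ t in Set.Ioc (0:ℝ) (α * N), Real.exp (-t ^ 2)
        ≤ ∫ t in Set.Ioi (0:ℝ), Real.exp (-t ^ 2) := by
          apply setIntegral_mono_set hint2
          · filter_upwards with t using Real.exp_nonneg _
          · exact (Set.Ioc_subset_Ioi_self).eventuallyLE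
      _ = Real.sqrt π / 2 := by
          have := integral_gaussian_Ioi 1
          simp only [one_mul, neg_mul, div_one] at this
          simpa using this
  have : α * ∑ k ∈ Finset.Icc 1 N, Real.exp (-(α * k) ^ 2) ≤ Real.sqrt π / 2 :=
    sum_le.trans int_le
  rw [le_div_iff₀ (by positivity)]
  linarith

lemma gap_lemma {n : ℕ} {α : ℝ} {s : ℕ → ℝ}
    (hsep : ∀ i, 1 ≤ i → i < n → α ≤ s (i + 1) - s i)
    {j i : ℕ} (hj : 1 ≤ j) (hji : j ≤ i) (hin : i ≤ n) :
    α * ((i : ℝ) - j) ≤ s i - s j := by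
  induction i, hji using Nat.le_induction with
  | base => simp
  | succ i hji ih =>
    have h1 := hsep i (hj.trans hji) (by omega)
    have h2 := ih (by omega)
    push_cast
    nlinarith

/-- If `0 ≤ s 1 < s 2 < ⋯ < s n` are real numbers separated by at least
`α ∈ (0,1]`, then for every `i ∈ {1,…,n}` one has
`∑_{j=1}^n exp (-(s i - s j)²) ≤ (1 + √π)/α`. -/
theorem sum_exp_neg_sq_le (n : ℕ) (α : ℝ) (hα0 : 0 < α) (hα1 : α ≤ 1)
    (s : ℕ → ℝ) (hs0 : 0 ≤ s 1)
    (hmono : ∀ i, 1 ≤ i → i < n → s i < s (i + 1))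
    (hsep : ∀ i, 1 ≤ i → i < n → α ≤ s (i + 1) - s i) :
    ∀ i ∈ Finset.Icc 1 n,
      ∑ j ∈ Finset.Icc 1 n, exp (-(s i - s j) ^ 2) ≤ (1 + Real.sqrt π) / α := by
  intro i hi
  simp only [Finset.mem_Icc] at hi
  obtain ⟨hi1, hin⟩ := hi
  set f : ℕ → ℝ := fun k => Real.exp (-(α * (k : ℝ)) ^ 2) with hf
  set T : ℝ := ∑ k ∈ Finset.Icc 1 n, f k with hT
  have hfnonneg : ∀ k, 0 ≤ f k := fun k => Real.exp_nonneg _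
  have hterm : ∀ j, 1 ≤ j → j ≤ i → Real.exp (-(s i - s j) ^ 2) ≤ f (i - j) := by
    intro j hj1 hji
    have hg := gap_lemma hsep hj1 hji hin
    simp only [hf]
    rw [Nat.cast_sub hji]
    apply Real.exp_le_exp.2
    have hji' : (j : ℝ) ≤ i := by exact_mod_cast hji
    have h0 : 0 ≤ α * ((i:ℝ) - j) := mul_nonneg hα0.le (by linarith)
    nlinarith [mul_self_le_mul_self h0 hg]
  have hterm' : ∀ j, i ≤ j → j ≤ n → Real.exp (-(s i - s j) ^ 2) ≤ f (j - i) := by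
    intro j hij hjn
    have hg := gap_lemma hsep hi1 hij hjn
    simp only [hf]
    rw [Nat.cast_sub hij]
    apply Real.exp_le_exp.2
    have hij' : (i : ℝ) ≤ j := by exact_mod_cast hij
    have h0 : 0 ≤ α * ((j:ℝ) - i) := mul_nonneg hα0.le (by linarith)
    nlinarith [mul_self_le_mul_self h0 hg]
  have hsplit : ∑ j ∈ Finset.Icc 1 n, Real.exp (-(s i - s j) ^ 2)
      = (∑ j ∈ Finset.Ioc 0 i, Real.exp (-(s i - s j) ^ 2))
      + ∑ j ∈ Finset.Ioc i n, Real.exp (-(s i - s j) ^ 2) := by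
    rw [show Finset.Icc 1 n = Finset.Ioc 0 n from Finset.Icc_add_one_left_eq_Ioc 0 n,
      Finset.sum_Ioc_consecutive _ (Nat.zero_le i) hin]
  have hS1 : ∑ j ∈ Finset.Ioc 0 i, Real.exp (-(s i - s j) ^ 2)
      ≤ ∑ k ∈ Finset.range i, f k := by
    have e1 : ∑ j ∈ Finset.Ioc 0 i, f (i - j) = ∑ k ∈ Finset.range i, f k := by
      apply Finset.sum_bij' (fun j _ => i - j) (fun k _ => i - k)
      · intro a ha; simp only [Finset.mem_Ioc] at ha; simp only [Finset.mem_range]; omega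
      · intro a ha; simp only [Finset.mem_range] at ha; simp only [Finset.mem_Ioc]; omega
      · intro a ha; simp only [Finset.mem_Ioc] at ha; omega
      · intro a ha; simp only [Finset.mem_range] at ha; omega
      · intro a _; rfl
    rw [← e1]
    apply Finset.sum_le_sum
    intro j hj
    simp only [Finset.mem_Ioc] at hj
    exact hterm j hj.1 hj.2
  have hS2 : ∑ j ∈ Finset.Ioc i n, Real.exp (-(s i - s j) ^ 2)
      ≤ ∑ k ∈ Finset.Ioc 0 (n - i), f k := by
    have e2 : ∑ j ∈ Finset.Ioc i n, f (j - i) = ∑ k ∈ Finset.Ioc 0 (n - i), f k := by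
      apply Finset.sum_bij' (fun j _ => j - i) (fun k _ => k + i)
      · intro a ha; simp only [Finset.mem_Ioc] at ha; simp only [Finset.mem_Ioc]; omega
      · intro a ha; simp only [Finset.mem_Ioc] at ha; simp only [Finset.mem_Ioc]; omega
      · intro a ha; simp only [Finset.mem_Ioc] at ha; omega
      · intro a ha; simp only [Finset.mem_Ioc] at ha; omega
      · intro a _; rfl
    rw [← e2]
    apply Finset.sum_le_sum
    intro j hj
    simp only [Finset.mem_Ioc] at hj
    exact hterm' j hj.1.le hj.2
  have hR1 : ∑ k ∈ Finset.range i, f k ≤ 1 + T := by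
    have hsub : Finset.range i ⊆ insert 0 (Finset.Icc 1 n) := by
      intro k hk
      simp only [Finset.mem_range] at hk
      simp only [Finset.mem_insert, Finset.mem_Icc]
      omega
    calc ∑ k ∈ Finset.range i, f k
        ≤ ∑ k ∈ insert 0 (Finset.Icc 1 n), f k :=
          Finset.sum_le_sum_of_subset_of_nonneg hsub (fun k _ _ => hfnonneg k)
      _ = f 0 + T := by
          rw [Finset.sum_insert (by simp)]
      _ = 1 + T := by simp [hf]
  have hR2 : ∑ k ∈ Finset.Ioc 0 (n - i), f k ≤ T := by
    apply Finset.sum_le_sum_of_subset_of_nonneg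
    · intro k hk
      simp only [Finset.mem_Ioc] at hk
      simp only [Finset.mem_Icc]
      omega
    · exact fun k _ _ => hfnonneg k
  have hTb : T ≤ Real.sqrt π / (2 * α) := tail_bound α hα0 n
  have hfin : (1 : ℝ) + Real.sqrt π / α ≤ (1 + Real.sqrt π) / α := by
    rw [add_div]
    have h1 : (1:ℝ) ≤ 1 / α := one_le_one_div hα0 hα1
    linarith
  have h2T : Real.sqrt π / (2 * α) + Real.sqrt π / (2 * α) = Real.sqrt π / α := by
    field_simp
    ring
  calc ∑ j ∈ Finset.Icc 1 n, Real.exp (-(s i - s j) ^ 2)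
      ≤ (1 + T) + T := by rw [hsplit]; exact add_le_add (hS1.trans hR1) (hS2.trans hR2)
    _ ≤ 1 + Real.sqrt π / α := by linarith
    _ ≤ (1 + Real.sqrt π) / α := hfin
end

section
/- Let (d_n)_{n≥1} be a mesh with partial sums t_n. Then for every n ≥ 1, d_n · t_{n+1} < 1/32. -/
open Filter

/-- A mesh: positive step sizes `d n` (for `n ≥ 1`) with square-summable
increments, partial sums `t n = ∑_{k=1}^{n-1} d k` tending to `+∞`,
`d 1 ≤ 1/8` and `d (n+1) ≤ d n / (1 + 64 d n ²)`. -/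
def IsMesh (d : ℕ → ℝ) : Prop :=
  (∀ n : ℕ, 1 ≤ n → 0 < d n) ∧
  (Summable fun k : ℕ => d (k + 1) ^ 2) ∧
  Tendsto (fun n : ℕ => ∑ k ∈ Finset.Ico 1 n, d k) atTop atTop ∧
  d 1 ≤ 1 / 8 ∧
  (∀ n : ℕ, 1 ≤ n → d (n + 1) ≤ d n / (1 + 64 * d n ^ 2))

/-- For a mesh with partial sums `t`, for every `n ≥ 1`, `d n * t (n+1) < 1/32`. -/
theorem mesh_mul_lt (d : ℕ → ℝ) (hd : IsMesh d)
    (t : ℕ → ℝ) (ht : ∀ n, t n = ∑ k ∈ Finset.Ico 1 n, d k)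
    (n : ℕ) (hn : 1 ≤ n) :
    d n * t (n + 1) < 1 / 32 := by
  obtain ⟨hpos, -, -, h1, hrec⟩ := hd
  have htnn : ∀ m : ℕ, 0 ≤ t m := by
    intro m; rw [ht]
    exact Finset.sum_nonneg fun k hk => (hpos k (Finset.mem_Ico.mp hk).1).le
  have hstep : ∀ m : ℕ, 1 ≤ m → t (m + 1) = t m + d m := by
    intro m hm
    rw [ht, ht, Finset.sum_Ico_succ_top (by omega : 1 ≤ m)]
  induction n, hn using Nat.le_induction with
  | base =>
    have h2 : t 2 = d 1 := by
      rw [show (2:ℕ) = 1 + 1 from rfl, hstep 1 le_rfl, ht]; simp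
    rw [h2]
    nlinarith [hpos 1 le_rfl]
  | succ n hn ih =>
    have ha := hpos n hn
    have hb := hpos (n + 1) (by omega)
    have hD : (0:ℝ) < 1 + 64 * d n ^ 2 := by positivity
    have hbn : d (n + 1) * (1 + 64 * d n ^ 2) ≤ d n := by
      have := hrec n hn
      rwa [le_div_iff₀ hD] at this
    have hs : 0 ≤ t (n + 1) := htnn (n + 1)
    rw [hstep (n + 1) (by omega)]
    set a := d n
    set b := d (n + 1)
    set s := t (n + 1)
    nlinarith [mul_nonneg (sub_nonneg.mpr hbn) (mul_nonneg hs hD.le),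
      mul_nonneg (sub_nonneg.mpr hbn) (by positivity : (0:ℝ) ≤ a + b * (1 + 64 * a ^ 2)),
      mul_pos (sub_pos.mpr ih) hD, sq_nonneg a, sq_nonneg (a^2), hD]
end

section
/- Let (d_n)_{n≥1} be a mesh with partial sums t_n. Then for all integers 1 ≤ m < n, exp(2 d_n (t_{n+1} − t_{m+1})) + exp(−2 d_m (t_{n+1} − t_{m+1})) ≤ 2. -/
open Filter

/-- If `a, b ≥ 0` and `a (1 + 32 b) ≤ b`, then `exp a + exp (−b) ≤ 2`. -/
lemma aux_exp_two (a b : ℝ) (ha : 0 ≤ a) (hb : 0 ≤ b) (h : a * (1 + 32 * b) ≤ b) :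
    Real.exp a + Real.exp (-b) ≤ 2 := by
  have ha1 : a < 1 := by nlinarith
  have h1 : Real.exp a ≤ 1 / (1 - a) := by
    rw [le_div_iff₀ (by linarith)]
    have h2 := Real.add_one_le_exp (-a)
    rw [Real.exp_neg] at h2
    have hp := Real.exp_pos a
    have h3 := mul_le_mul_of_nonneg_left h2 hp.le
    rw [mul_inv_cancel₀ hp.ne'] at h3
    nlinarith
  have h2 : Real.exp (-b) ≤ 1 / (1 + b) := by
    rw [Real.exp_neg, one_div]
    exact inv_anti₀ (by linarith) (by linarith [Real.add_one_le_exp b])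
  have hd1 : 1 / (1 - a) + 1 / (1 + b) ≤ 2 := by
    rw [div_add_div _ _ (by linarith : (1:ℝ) - a ≠ 0) (by linarith : (1:ℝ) + b ≠ 0),
      div_le_iff₀ (by nlinarith : 0 < (1 - a) * (1 + b))]
    nlinarith
  linarith

/-- For a mesh with partial sums `t`, for all `1 ≤ m < n`,
`exp (2 d n (t (n+1) − t (m+1))) + exp (−2 d m (t (n+1) − t (m+1))) ≤ 2`. -/
theorem mesh_exp_add_exp_le_two (d : ℕ → ℝ) (hd : IsMesh d)
    (t : ℕ → ℝ) (ht : ∀ n, t n = ∑ k ∈ Finset.Ico 1 n, d k)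
    (m n : ℕ) (hm : 1 ≤ m) (hmn : m < n) :
    Real.exp (2 * d n * (t (n + 1) - t (m + 1))) +
      Real.exp (-(2 * d m * (t (n + 1) - t (m + 1)))) ≤ 2 := by
  obtain ⟨hpos, -, -, hd1, hrec⟩ := hd
  have hdec : ∀ k, 1 ≤ k → d (k + 1) ≤ d k := by
    intro k hk
    have hk' := hpos k hk
    have h := hrec k hk
    have : d k / (1 + 64 * d k ^ 2) ≤ d k := by
      rw [div_le_iff₀ (by nlinarith)]
      nlinarith
    linarith
  have key : ∀ N, m ≤ N →
      1 / d m + 64 * (∑ k ∈ Finset.Ico (m + 1) (N + 1), d k) ≤ 1 / d N := by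
    intro N hN
    induction N, hN using Nat.le_induction with
    | base => simp
    | succ n hn ih =>
      have hn1 : 1 ≤ n := le_trans hm hn
      have hdn := hpos n hn1
      have hdn1 := hpos (n + 1) (by omega)
      have hstep : 1 / d n + 64 * d n ≤ 1 / d (n + 1) := by
        have h := hrec n hn1
        have h2 : d (n + 1) * (1 + 64 * d n ^ 2) ≤ d n :=
          (le_div_iff₀ (by nlinarith)).mp h
        rw [div_add' _ _ _ hdn.ne', div_le_div_iff₀ hdn hdn1]
        nlinarith
      have hsum : ∑ k ∈ Finset.Ico (m + 1) (n + 1 + 1), d k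
          = (∑ k ∈ Finset.Ico (m + 1) (n + 1), d k) + d (n + 1) :=
        Finset.sum_Ico_succ_top (by omega) _
      have hd2 : d (n + 1) ≤ d n := hdec n hn1
      rw [hsum]
      linarith
  set S := ∑ k ∈ Finset.Ico (m + 1) (n + 1), d k with hSdef
  have htS : t (n + 1) - t (m + 1) = S := by
    rw [ht, ht, hSdef,
      ← Finset.sum_Ico_consecutive d (by omega : 1 ≤ m + 1) (by omega : m + 1 ≤ n + 1)]
    ring
  have hS0 : 0 ≤ S := Finset.sum_nonneg fun k hk => by
    have := (Finset.mem_Ico.mp hk).1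
    exact (hpos k (by omega)).le
  have hdm := hpos m hm
  have hdn := hpos n (by omega)
  have hK := key n (le_of_lt hmn)
  have h3 := mul_le_mul_of_nonneg_right hK (mul_pos hdn hdm).le
  have e1 : (1 / d m + 64 * S) * (d n * d m) = d n + 64 * S * d n * d m := by
    field_simp
  have e2 : (1 / d n) * (d n * d m) = d m := by field_simp
  rw [e1, e2] at h3
  have hrel : (2 * d n * S) * (1 + 32 * (2 * d m * S)) ≤ 2 * d m * S := by
    nlinarith [mul_le_mul_of_nonneg_right h3 (by linarith : (0:ℝ) ≤ 2 * S)]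
  rw [htS]
  exact aux_exp_two _ _ (by positivity) (by positivity) hrel
end

section
/- Let X, u, a mesh (d_n) with partial sums t_n, and x_n := ρ_n u(t_n) be as in the standing construction. Then x_n converges weakly to 0 as n → ∞ (i.e., ⟨x_n, y⟩ → 0 for every y ∈ X), while ‖x_n‖ = ρ_n converges to ρ_∞ > 0; in particular (x_n) does not converge to 0 in norm. -/
open Filter
open scoped RealInnerProductSpace

/-- The sequence `x n = ρ n • u (t n)` converges weakly to `0`, while
`‖x n‖ = ρ n → ρ_∞ > 0`; in particular it does not converge to `0` in norm. -/
theorem x_weak_but_not_strong {X : Type*} [NormedAddCommGroup X] [InnerProductSpace ℝ X] [CompleteSpace X]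
    (u : ℝ → X)
    (hu : ∀ s : ℝ, 0 ≤ s → ∀ t : ℝ, 0 ≤ t → ⟪u s, u t⟫ = Real.exp (-(s - t) ^ 2))
    (d : ℕ → ℝ) (hd : IsMesh d)
    (t : ℕ → ℝ) (ht : ∀ n, t n = ∑ k ∈ Finset.Ico 1 n, d k)
    (ρ : ℕ → ℝ) (hρ : ∀ n, ρ n = Real.exp (-(∑ k ∈ Finset.Ico 1 n, d k ^ 2)))
    (x : ℕ → X) (hx : ∀ n, x n = ρ n • u (t n)) :
    (∀ y : X, Tendsto (fun n : ℕ => ⟪x n, y⟫) atTop (nhds 0)) ∧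
    (∀ n : ℕ, 1 ≤ n → ‖x n‖ = ρ n) ∧
    Tendsto (fun n : ℕ => ‖x n‖) atTop
      (nhds (Real.exp (-∑' k : ℕ, d (k + 1) ^ 2))) ∧
    0 < Real.exp (-∑' k : ℕ, d (k + 1) ^ 2) ∧
    ¬ Tendsto x atTop (nhds 0) := by
  obtain ⟨hdpos, hdsum, hdtend, -, -⟩ := hd
  have ht0 : ∀ n, 0 ≤ t n := by
    intro n
    rw [ht]
    exact Finset.sum_nonneg fun k hk => (hdpos k (Finset.mem_Ico.1 hk).1).le
  have hnormu : ∀ s : ℝ, 0 ≤ s → ‖u s‖ = 1 := by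
    intro s hs
    have h1 := hu s hs s hs
    simp only [sub_self, neg_zero, ne_eq, OfNat.ofNat_ne_zero, not_false_iff,
      zero_pow, Real.exp_zero] at h1
    have h2 := real_inner_self_eq_norm_sq (u s)
    nlinarith [norm_nonneg (u s)]
  have hρpos : ∀ n, 0 < ρ n := fun n => by rw [hρ]; exact Real.exp_pos _
  have hρle : ∀ n, ρ n ≤ 1 := by
    intro n
    rw [hρ]
    apply Real.exp_le_one_iff.2
    simp only [neg_nonpos]
    exact Finset.sum_nonneg fun k _ => sq_nonneg _
  have hnorm : ∀ n, ‖x n‖ = ρ n := by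
    intro n
    rw [hx, norm_smul, hnormu (t n) (ht0 n), Real.norm_eq_abs,
      abs_of_pos (hρpos n), mul_one]
  have httop : Tendsto t atTop atTop := hdtend.congr fun n => (ht n).symm
  -- partial sums of squares tend to the tsum
  have h1 : Tendsto (fun n : ℕ => ∑ k ∈ Finset.Ico 1 n, d k ^ 2) atTop
      (nhds (∑' k : ℕ, d (k + 1) ^ 2)) := by
    have h2 := hdsum.hasSum.tendsto_sum_nat.comp (tendsto_sub_atTop_nat 1)
    refine h2.congr fun n => ?_
    rw [Finset.sum_Ico_eq_sum_range]
    simp [add_comm]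
  have hρtend : Tendsto ρ atTop (nhds (Real.exp (-∑' k : ℕ, d (k + 1) ^ 2))) := by
    have := (Real.continuous_exp.tendsto _).comp h1.neg
    exact this.congr fun n => (hρ n).symm
  have hnormtend : Tendsto (fun n : ℕ => ‖x n‖) atTop
      (nhds (Real.exp (-∑' k : ℕ, d (k + 1) ^ 2))) :=
    hρtend.congr fun n => (hnorm n).symm
  -- the closed span
  set V : Submodule ℝ X := (Submodule.span ℝ (u '' Set.Ici (0:ℝ))).topologicalClosure with hV
  have hxV : ∀ n, x n ∈ V := by
    intro n
    rw [hx]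
    exact V.smul_mem _
      (Submodule.le_topologicalClosure _ (Submodule.subset_span ⟨t n, ht0 n, rfl⟩))
  have hspan : ∀ z ∈ Submodule.span ℝ (u '' Set.Ici (0:ℝ)),
      Tendsto (fun n : ℕ => ⟪x n, z⟫) atTop (nhds 0) := by
    intro z hz
    induction hz using Submodule.span_induction with
    | mem w hw =>
      obtain ⟨s, hs, rfl⟩ := hw
      have key : ∀ n, ⟪x n, u s⟫ = ρ n * Real.exp (-(t n - s) ^ 2) := by
        intro n
        rw [hx, real_inner_smul_left, hu (t n) (ht0 n) s hs]
      have hsq : Tendsto (fun n : ℕ => (t n - s) ^ 2) atTop atTop := by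
        have h3 : Tendsto (fun n : ℕ => t n - s) atTop atTop :=
          tendsto_atTop_add_const_right atTop (-s) httop
        exact (tendsto_pow_atTop two_ne_zero).comp h3
      have hb : Tendsto (fun n : ℕ => Real.exp (-(t n - s) ^ 2)) atTop (nhds 0) :=
        Real.tendsto_exp_atBot.comp (tendsto_neg_atBot_iff.2 hsq)
      refine squeeze_zero (fun n => ?_) (fun n => ?_) hb
      · rw [key n]; exact mul_nonneg (hρpos n).le (Real.exp_pos _).le
      · rw [key n]
        nlinarith [hρle n, hρpos n, Real.exp_pos (-(t n - s) ^ 2),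
          (Real.exp_pos (-(t n - s) ^ 2)).le]
    | zero => simp only [inner_zero_right]; exact tendsto_const_nhds
    | add w v _ _ ihw ihv =>
      have := ihw.add ihv
      simp only [add_zero] at this
      exact this.congr fun n => (inner_add_right _ _ _).symm
    | smul a w _ ihw =>
      have := ihw.const_mul a
      simp only [mul_zero] at this
      exact this.congr fun n => (real_inner_smul_right _ _ _).symm
  have hVtend : ∀ z ∈ V, Tendsto (fun n : ℕ => ⟪x n, z⟫) atTop (nhds 0) := by
    intro z hz
    rw [NormedAddCommGroup.tendsto_nhds_zero]
    intro ε hε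
    have hz' : z ∈ closure ((Submodule.span ℝ (u '' Set.Ici (0:ℝ)) : Set X)) := hz
    obtain ⟨w, hw, hwz⟩ := Metric.mem_closure_iff.1 hz' (ε / 2) (by positivity)
    have h2 := (NormedAddCommGroup.tendsto_nhds_zero.1 (hspan w hw)) (ε / 2) (by positivity)
    filter_upwards [h2] with n hn
    have hdec : ⟪x n, z⟫ = ⟪x n, w⟫ + ⟪x n, z - w⟫ := by
      rw [← inner_add_right]
      congr 1
      abel
    have hbound : ‖⟪x n, z - w⟫‖ ≤ ‖z - w‖ := by
      calc ‖⟪x n, z - w⟫‖ ≤ ‖x n‖ * ‖z - w‖ := norm_inner_le_norm _ _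
        _ ≤ 1 * ‖z - w‖ := by
            apply mul_le_mul_of_nonneg_right _ (norm_nonneg _)
            rw [hnorm]; exact hρle n
        _ = ‖z - w‖ := one_mul _
    have hzw : ‖z - w‖ < ε / 2 := by rwa [← dist_eq_norm]
    calc ‖⟪x n, z⟫‖ ≤ ‖⟪x n, w⟫‖ + ‖⟪x n, z - w⟫‖ := by rw [hdec]; exact norm_add_le _ _
      _ < ε / 2 + ε / 2 := by
          apply add_lt_add_of_lt_of_le hn (hbound.trans hzw.le)
      _ = ε := by ring
  have hweak : ∀ y : X, Tendsto (fun n : ℕ => ⟪x n, y⟫) atTop (nhds 0) := by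
    intro y
    haveI : CompleteSpace V :=
      (Submodule.isClosed_topologicalClosure _).completeSpace_coe
    obtain ⟨a, haV, b, hb, rfl⟩ := V.exists_add_mem_mem_orthogonal y
    have hbz : ∀ n, ⟪x n, b⟫ = 0 := fun n =>
      (Submodule.mem_orthogonal V b).1 hb (x n) (hxV n)
    have := hVtend a haV
    have h4 : Tendsto (fun n : ℕ => ⟪x n, a + b⟫) atTop (nhds 0) := by
      refine this.congr fun n => ?_
      rw [inner_add_right, hbz n, add_zero]
    exact h4
  refine ⟨hweak, fun n _ => hnorm n, hnormtend, Real.exp_pos _, ?_⟩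
  intro hcon
  have h5 : Tendsto (fun n : ℕ => ‖x n‖) atTop (nhds 0) := by
    simpa using hcon.norm
  have h6 := tendsto_nhds_unique hnormtend h5
  exact absurd h6 (Real.exp_pos _).ne'
end

section
/- Let X, u, a mesh (d_n) with partial sums t_n, and x_n := ρ_n u(t_n) be as in the standing construction. Then for all integers 1 ≤ m < n, one has 0 ≤ ⟨x_{m+1} − x_{n+1}, (x_m − x_{m+1}) − (x_n − x_{n+1})⟩. -/
open Filter
open scoped RealInnerProductSpace

private lemma exp_neg_le_quad {y : ℝ} (hy : 0 ≤ y) :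
    Real.exp (-y) ≤ 1 - y + (3/4) * y ^ 2 := by
  have h1 : 1 + y/2 ≤ Real.exp (y/2) := by linarith [Real.add_one_le_exp (y/2)]
  have h2 : Real.exp (y/2) * Real.exp (y/2) = Real.exp y := by
    rw [← Real.exp_add]; ring_nf
  have h4 : (1 + y/2)^2 ≤ Real.exp y := by nlinarith [Real.exp_pos (y/2)]
  have h3 : Real.exp (-y) * Real.exp y = 1 := by rw [← Real.exp_add]; simp
  have h5 := Real.exp_pos (-y)
  have e1 : Real.exp (-y) * (1 + y/2)^2 ≤ 1 := by nlinarith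
  have e2 : (1:ℝ) ≤ (1 - y + (3/4)*y^2) * (1 + y/2)^2 := by
    nlinarith [pow_nonneg hy 3, pow_nonneg hy 4]
  have e3 : (0:ℝ) < (1 + y/2)^2 := by positivity
  exact le_of_mul_le_mul_right (e1.trans e2) e3

private lemma key_ineq {a b : ℝ} (h0 : 0 ≤ a) (h1 : a ≤ 1/8)
    (hb : 2*a + 16*a^2 ≤ b) : Real.exp (-b) + 1 ≤ 2 * Real.exp (-a) := by
  have hy : 0 ≤ 2*a + 16*a^2 := by nlinarith
  have hb' : Real.exp (-b) ≤ Real.exp (-(2*a + 16*a^2)) := by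
    apply Real.exp_le_exp.mpr; linarith
  have h2 := exp_neg_le_quad hy
  have h3 : 1 - a ≤ Real.exp (-a) := by linarith [Real.add_one_le_exp (-a)]
  nlinarith [mul_nonneg (mul_nonneg h0 h0) (sub_nonneg.mpr h1),
    mul_nonneg (mul_nonneg (mul_nonneg h0 h0) h0) (sub_nonneg.mpr h1)]

set_option maxHeartbeats 1000000 in
/-- For all `1 ≤ m < n` (finite case of the monotonicity inequality):
`0 ≤ ⟪x (m+1) − x (n+1), (x m − x (m+1)) − (x n − x (n+1))⟫`. -/
theorem x_monotone_inequality {X : Type*} [NormedAddCommGroup X] [InnerProductSpace ℝ X] [CompleteSpace X]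
    (u : ℝ → X)
    (hu : ∀ s : ℝ, 0 ≤ s → ∀ t : ℝ, 0 ≤ t → ⟪u s, u t⟫ = Real.exp (-(s - t) ^ 2))
    (d : ℕ → ℝ) (hd : IsMesh d)
    (t : ℕ → ℝ) (ht : ∀ n, t n = ∑ k ∈ Finset.Ico 1 n, d k)
    (ρ : ℕ → ℝ) (hρ : ∀ n, ρ n = Real.exp (-(∑ k ∈ Finset.Ico 1 n, d k ^ 2)))
    (x : ℕ → X) (hx : ∀ n, x n = ρ n • u (t n)) :
    ∀ m n : ℕ, 1 ≤ m → m < n →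
      0 ≤ ⟪x (m + 1) - x (n + 1), (x m - x (m + 1)) - (x n - x (n + 1))⟫ := by
  obtain ⟨hpos, -, -, h18, hstep⟩ := hd
  -- basic facts about the mesh
  have hanti : ∀ k, 1 ≤ k → d (k+1) ≤ d k := by
    intro k hk
    have h1 : (0:ℝ) < 1 + 64 * d k ^ 2 := by positivity
    have h2 := hpos k hk
    calc d (k+1) ≤ d k / (1 + 64 * d k ^ 2) := hstep k hk
      _ ≤ d k := by rw [div_le_iff₀ h1]; nlinarith
  have hmono : ∀ j k, 1 ≤ j → j ≤ k → d k ≤ d j := by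
    intro j k hj hjk
    induction k, hjk using Nat.le_induction with
    | base => exact le_rfl
    | succ p hp ih => exact (hanti p (hj.trans hp)).trans ih
  have hle18 : ∀ k, 1 ≤ k → d k ≤ 1/8 := fun k hk => (hmono 1 k le_rfl hk).trans h18
  have hdrop : ∀ k, 1 ≤ k → 32 * d k ^ 3 ≤ d k - d (k+1) := by
    intro k hk
    have h1 := hstep k hk
    have h2 := hpos k hk
    have h3 := hle18 k hk
    have h4 : (0:ℝ) < 1 + 64 * d k ^ 2 := by positivity
    rw [le_div_iff₀ h4] at h1
    nlinarith [mul_nonneg (mul_nonneg (mul_nonneg h2.le h2.le) h2.le)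
      (by nlinarith : (0:ℝ) ≤ 1/64 - d k ^ 2)]
  have hsumcube : ∀ p q, 1 ≤ p → p ≤ q →
      32 * ∑ k ∈ Finset.Ico p q, d k ^ 3 ≤ d p - d q := by
    intro p q hp hpq
    induction q, hpq using Nat.le_induction with
    | base => simp
    | succ q hq ih =>
      rw [Finset.sum_Ico_succ_top hq]
      have := hdrop q (hp.trans hq)
      linarith
  have hsum64 : ∀ q, 1 ≤ q → d q * ∑ k ∈ Finset.Ico 1 (q+1), d k ≤ 1/64 := by
    intro q hq
    induction q, hq using Nat.le_induction with
    | base =>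
      have h2 := hpos 1 le_rfl
      rw [show (1:ℕ)+1 = 2 from rfl, Finset.sum_Ico_succ_top le_rfl]
      simp only [Finset.Ico_self, Finset.sum_empty, zero_add]
      nlinarith
    | succ q hq ih =>
      have hS : 0 ≤ ∑ k ∈ Finset.Ico 1 (q+1), d k :=
        Finset.sum_nonneg fun k hk => (hpos k (Finset.mem_Ico.mp hk).1).le
      rw [Finset.sum_Ico_succ_top (by omega)]
      have h1 := hstep q hq
      have h4 : (0:ℝ) < 1 + 64 * d q ^ 2 := by positivity
      rw [le_div_iff₀ h4] at h1
      have h2 := hpos q hq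
      have h3 := hpos (q+1) (by omega)
      have h5 := hanti q hq
      nlinarith [mul_le_mul_of_nonneg_right h1 hS, mul_le_mul_of_nonneg_left h1 h3.le]
  -- nonnegativity of times
  have htnonneg : ∀ i, 0 ≤ t i := by
    intro i
    rw [ht]
    exact Finset.sum_nonneg fun k hk => (hpos k (Finset.mem_Ico.mp hk).1).le
  -- inner products
  have hxx : ∀ i j : ℕ, (⟪x i, x j⟫ : ℝ) =
      Real.exp (-(∑ k ∈ Finset.Ico 1 i, d k ^ 2) + -(∑ k ∈ Finset.Ico 1 j, d k ^ 2)
        + -(t i - t j) ^ 2) := by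
    intro i j
    rw [hx i, hx j, real_inner_smul_left, real_inner_smul_right,
      hu (t i) (htnonneg i) (t j) (htnonneg j), hρ i, hρ j, ← Real.exp_add, ← Real.exp_add]
    ring_nf
  intro m n hm hmn
  have hn : 1 ≤ n := hm.trans hmn.le
  have hm1 : ∑ k ∈ Finset.Ico 1 (m+1), d k ^ 2 = (∑ k ∈ Finset.Ico 1 m, d k ^ 2) + d m ^ 2 :=
    Finset.sum_Ico_succ_top hm _
  have hn1 : ∑ k ∈ Finset.Ico 1 (n+1), d k ^ 2 = (∑ k ∈ Finset.Ico 1 n, d k ^ 2) + d n ^ 2 :=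
    Finset.sum_Ico_succ_top hn _
  have htm1 : t (m+1) = t m + d m := by
    rw [ht, ht, Finset.sum_Ico_succ_top hm]
  have htn1 : t (n+1) = t n + d n := by
    rw [ht, ht, Finset.sum_Ico_succ_top hn]
  set A : ℝ := ∑ k ∈ Finset.Ico (m+1) (n+1), d k with hAdef
  have hAeq : t n - t m - d m + d n = A := by
    have e1 := Finset.sum_Ico_consecutive (fun k => d k) (show 1 ≤ m+1 by omega)
      (show m+1 ≤ n+1 by omega)
    rw [Finset.sum_Ico_succ_top hn (fun k => d k), Finset.sum_Ico_succ_top hm (fun k => d k)] at e1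
    rw [ht n, ht m]
    rw [hAdef]
    linarith [e1]
  have hA0 : 0 ≤ A :=
    Finset.sum_nonneg fun k hk =>
      (hpos k (le_trans (by omega) (Finset.mem_Ico.mp hk).1)).le
  have hdn := hpos n hn
  have hdm := hpos m hm
  have halpha : 2 * d n * A ≤ 1/8 := by
    have hsub : A ≤ ∑ k ∈ Finset.Ico 1 (n+1), d k := by
      apply Finset.sum_le_sum_of_subset_of_nonneg
        (Finset.Ico_subset_Ico (by omega) le_rfl)
      intro k hk _
      exact (hpos k (Finset.mem_Ico.mp hk).1).le
    have h64 := hsum64 n hn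
    nlinarith
  have h0a : 0 ≤ 2 * d n * A := mul_nonneg (by nlinarith) hA0
  have hcube1 : d n ^ 2 * A ≤ ∑ k ∈ Finset.Ico (m+1) (n+1), d k ^ 3 := by
    rw [hAdef, Finset.mul_sum]
    apply Finset.sum_le_sum
    intro k hk
    obtain ⟨hk1, hk2⟩ := Finset.mem_Ico.mp hk
    have h1 : d n ≤ d k := hmono k n (by omega) (by omega)
    have h2 := hpos k (by omega)
    have h5 : d n ^ 2 ≤ d k ^ 2 := by nlinarith
    nlinarith [mul_nonneg h2.le (sub_nonneg.mpr h5)]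
  have hshift : ∑ k ∈ Finset.Ico (m+1) (n+1), d k ^ 3 ≤ ∑ k ∈ Finset.Ico m n, d k ^ 3 := by
    rw [Finset.sum_Ico_eq_sum_range, Finset.sum_Ico_eq_sum_range]
    rw [show n + 1 - (m+1) = n - m from by omega]
    apply Finset.sum_le_sum
    intro i hi
    have h1 : d (m + i + 1) ≤ d (m + i) := hanti _ (by omega)
    have h2 := hpos (m+i+1) (by omega)
    have h3 := hpos (m+i) (by omega)
    rw [show m + 1 + i = m + i + 1 from by omega]
    exact pow_le_pow_left₀ h2.le h1 3
  have hdmn : 32 * (d n ^ 2 * A) ≤ d m - d n := by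
    have hsc := hsumcube m n hm hmn.le
    nlinarith
  have hbeta : 2*(2 * d n * A) + 16*(2 * d n * A)^2 ≤ 2 * (d m + d n) * A := by
    nlinarith [mul_le_mul_of_nonneg_left hdmn hA0]
  have key := key_ineq h0a halpha hbeta
  have expand : (⟪x (m+1) - x (n+1), (x m - x (m+1)) - (x n - x (n+1))⟫ : ℝ) =
      ⟪x (m+1), x m⟫ - ⟪x (m+1), x (m+1)⟫ - ⟪x (m+1), x n⟫ + ⟪x (m+1), x (n+1)⟫
      - ⟪x (n+1), x m⟫ + ⟪x (n+1), x (m+1)⟫ + ⟪x (n+1), x n⟫ - ⟪x (n+1), x (n+1)⟫ := by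
    simp only [inner_sub_left, inner_sub_right]; ring
  set q : ℝ := -((∑ k ∈ Finset.Ico 1 m, d k ^ 2) + d m ^ 2)
      + -(∑ k ∈ Finset.Ico 1 n, d k ^ 2) + -(t n - t m - d m) ^ 2 with hq
  have Eself1 : (⟪x (m+1), x m⟫ : ℝ) = ⟪x (m+1), x (m+1)⟫ := by
    rw [hxx, hxx, hm1, htm1]; congr 1; ring
  have Eself2 : (⟪x (n+1), x n⟫ : ℝ) = ⟪x (n+1), x (n+1)⟫ := by
    rw [hxx, hxx, hn1, htn1]; congr 1; ring
  have E3 : (⟪x (m+1), x n⟫ : ℝ) = Real.exp q := by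
    rw [hxx, hm1, htm1, hq]; congr 1; ring
  have E4 : (⟪x (m+1), x (n+1)⟫ : ℝ) = Real.exp q * Real.exp (-(2 * d n * A)) := by
    rw [hxx, hm1, hn1, htm1, htn1, ← Real.exp_add, ← hAeq, hq]; congr 1; ring
  have E5 : (⟪x (n+1), x (m+1)⟫ : ℝ) = Real.exp q * Real.exp (-(2 * d n * A)) := by
    rw [hxx, hm1, hn1, htm1, htn1, ← Real.exp_add, ← hAeq, hq]; congr 1; ring
  have E6 : (⟪x (n+1), x m⟫ : ℝ) = Real.exp q * Real.exp (-(2 * (d m + d n) * A)) := by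
    rw [hxx, hn1, htn1, ← Real.exp_add, ← hAeq, hq]; congr 1; ring
  rw [expand, Eself1, Eself2, E3, E4, E5, E6]
  have hmul := mul_le_mul_of_nonneg_left key (le_of_lt (Real.exp_pos q))
  nlinarith [hmul]
end

section
/- Let X, u, a mesh (d_n) with partial sums t_n, and x_n := ρ_n u(t_n) be as in the standing construction, and let K be the smallest closed convex cone containing {x_n : n ≥ 1}. If y ∈ K satisfies 0 ≤ ⟨x_{n+1} − y, x_n − x_{n+1}⟩ for every n ≥ 1, then y = 0. -/
open Filter
open scoped RealInnerProductSpace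

/-- If `y ∈ K` (the smallest closed convex cone containing the `x n`) satisfies
`0 ≤ ⟪x (n+1) − y, x n − x (n+1)⟫` for every `n ≥ 1`, then `y = 0`. -/
theorem mem_cone_inner_nonneg_imp_zero {X : Type*} [NormedAddCommGroup X] [InnerProductSpace ℝ X] [CompleteSpace X]
    (u : ℝ → X)
    (hu : ∀ s : ℝ, 0 ≤ s → ∀ t : ℝ, 0 ≤ t → ⟪u s, u t⟫ = Real.exp (-(s - t) ^ 2))
    (d : ℕ → ℝ) (hd : IsMesh d)
    (t : ℕ → ℝ) (ht : ∀ n, t n = ∑ k ∈ Finset.Ico 1 n, d k)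
    (ρ : ℕ → ℝ) (hρ : ∀ n, ρ n = Real.exp (-(∑ k ∈ Finset.Ico 1 n, d k ^ 2)))
    (x : ℕ → X) (hx : ∀ n, x n = ρ n • u (t n))
    (K : Set X)
    (hK : K = closure (convexHull ℝ
      {y : X | ∃ (c : ℝ) (n : ℕ), 0 ≤ c ∧ 1 ≤ n ∧ y = c • x n}))
    (y : X) (hy : y ∈ K)
    (hineq : ∀ n : ℕ, 1 ≤ n → 0 ≤ ⟪x (n + 1) - y, x n - x (n + 1)⟫) :
    y = 0 := by
  obtain ⟨hdpos, hdsum, hdtop, hd18, hdrec⟩ := hd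
  set S : Set X := {y : X | ∃ (c : ℝ) (n : ℕ), 0 ≤ c ∧ 1 ≤ n ∧ y = c • x n} with hS
  -- basic facts
  have htfun : t = fun n : ℕ => ∑ k ∈ Finset.Ico 1 n, d k := funext ht
  have htt : Tendsto t atTop atTop := by rw [htfun]; exact hdtop
  have hρpos : ∀ n, 0 < ρ n := fun n => by rw [hρ]; exact Real.exp_pos _
  have hρle : ∀ n, ρ n ≤ 1 := by
    intro n
    rw [hρ]
    rw [Real.exp_le_one_iff, neg_nonpos]
    exact Finset.sum_nonneg fun k _ => sq_nonneg _
  have htnonneg : ∀ n, 0 ≤ t n := by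
    intro n
    rw [ht]
    exact Finset.sum_nonneg fun k hk => le_of_lt (hdpos k (Finset.mem_Ico.1 hk).1)
  have hxx : ∀ m n : ℕ, ⟪x m, x n⟫ = ρ m * ρ n * Real.exp (-(t m - t n) ^ 2) := by
    intro m n
    rw [hx m, hx n, real_inner_smul_left, real_inner_smul_right,
      hu _ (htnonneg m) _ (htnonneg n)]
    ring
  -- norm of x m is at most 1
  have hxnorm : ∀ m, ‖x m‖ ≤ 1 := by
    intro m
    have h2 : ‖x m‖ ^ 2 = ρ m * ρ m := by
      rw [← real_inner_self_eq_norm_sq, hxx]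
      simp
    nlinarith [norm_nonneg (x m), hρpos m, hρle m]
  -- weak convergence to 0 against each x k
  have hten : ∀ k : ℕ, Tendsto (fun m => ⟪x k, x m⟫) atTop (nhds 0) := by
    intro k
    have hg : Tendsto (fun m => Real.exp (-(t k - t m) ^ 2)) atTop (nhds 0) := by
      apply Real.tendsto_exp_atBot.comp
      rw [tendsto_neg_atBot_iff]
      have h1 : Tendsto (fun m => t m - t k) atTop atTop :=
        tendsto_atTop_add_const_right _ _ htt
      have h2 : Tendsto (fun z : ℝ => z ^ 2) atTop atTop :=
        tendsto_pow_atTop (two_ne_zero)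
      have := h2.comp h1
      refine this.congr fun m => ?_
      simp [Function.comp]
      ring
    refine squeeze_zero (fun m => ?_) (fun m => ?_) hg
    · rw [hxx]
      exact mul_nonneg (mul_nonneg (hρpos k).le (hρpos m).le) (Real.exp_pos _).le
    · rw [hxx]
      calc ρ k * ρ m * Real.exp (-(t k - t m) ^ 2)
          ≤ 1 * 1 * Real.exp (-(t k - t m) ^ 2) := by
            gcongr <;> first | exact (hρpos _).le | exact hρle _
        _ = Real.exp (-(t k - t m) ^ 2) := by ring
  -- monotonicity of ⟪y, x n⟫
  have hmono : ∀ n : ℕ, 1 ≤ n → ⟪y, x n⟫ ≤ ⟪y, x (n + 1)⟫ := by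
    intro n hn
    have hterm : t (n + 1) = t n + d n := by
      rw [ht, ht, Finset.sum_Ico_succ_top hn]
    have hρterm : ρ (n + 1) = ρ n * Real.exp (-(d n ^ 2)) := by
      rw [hρ, hρ, Finset.sum_Ico_succ_top hn, neg_add, Real.exp_add]
    have hself : ⟪x (n + 1), x (n + 1)⟫ = ρ (n + 1) * ρ (n + 1) := by
      rw [hxx]; simp
    have hcross : ⟪x (n + 1), x n⟫ = ρ (n + 1) * ρ (n + 1) := by
      rw [hxx, hterm]
      have : -(t n + d n - t n) ^ 2 = -(d n ^ 2) := by ring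
      rw [this, hρterm]
      ring
    have h := hineq n hn
    rw [inner_sub_left, inner_sub_right, inner_sub_right, hself, hcross] at h
    linarith
  have hchain : ∀ n : ℕ, 1 ≤ n → ∀ m : ℕ, n ≤ m → ⟪y, x n⟫ ≤ ⟪y, x m⟫ := by
    intro n hn m hm
    induction m, hm using Nat.le_induction with
    | base => exact le_rfl
    | succ m hm ih => exact ih.trans (hmono m (hn.trans hm))
  -- convex hull elements pair to 0 in the limit
  have hCten : ∀ z ∈ convexHull ℝ S, Tendsto (fun m => ⟪z, x m⟫) atTop (nhds 0) := by
    have hsub : convexHull ℝ S ⊆ {z : X | Tendsto (fun m => ⟪z, x m⟫) atTop (nhds 0)} := by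
      apply convexHull_min
      · rintro z ⟨c, k, hc, hk, rfl⟩
        simp only [Set.mem_setOf_eq]
        have h0 := (hten k).const_mul c
        rw [mul_zero] at h0
        exact h0.congr fun m => (real_inner_smul_left _ _ _).symm
      · intro z1 h1 z2 h2 a b ha hb hab
        simp only [Set.mem_setOf_eq] at h1 h2 ⊢
        have h0 := (h1.const_mul a).add (h2.const_mul b)
        simp only [mul_zero, add_zero] at h0
        exact h0.congr fun m => by
          rw [inner_add_left, real_inner_smul_left, real_inner_smul_left]
    exact fun z hz => hsub hz
  -- key: ⟪y, x n⟫ ≤ 0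
  have hkey : ∀ n : ℕ, 1 ≤ n → ⟪y, x n⟫ ≤ 0 := by
    intro n hn
    by_contra hpos
    push_neg at hpos
    set ε := ⟪y, x n⟫ with hε
    have hεpos : 0 < ε := hpos
    have hyc : y ∈ closure (convexHull ℝ S) := by rw [hK] at hy; exact hy
    obtain ⟨y', hy', hdist⟩ := Metric.mem_closure_iff.1 hyc (ε / 2) (by positivity)
    have hy't := hCten y' hy'
    have hev : ∀ᶠ m in atTop, ⟪y', x m⟫ < ε / 2 :=
      (hy't.eventually (eventually_lt_nhds (by positivity : (0:ℝ) < ε / 2)))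
    obtain ⟨m, hm1, hm2⟩ := (hev.and (eventually_ge_atTop n)).exists
    have h1 : ε ≤ ⟪y, x m⟫ := hchain n hn m hm2
    have h2 : ⟪y, x m⟫ = ⟪y', x m⟫ + ⟪y - y', x m⟫ := by
      rw [inner_sub_left]; ring
    have h3 : ⟪y - y', x m⟫ ≤ ‖y - y'‖ * ‖x m‖ := real_inner_le_norm _ _
    have h4 : ‖y - y'‖ < ε / 2 := by rwa [← dist_eq_norm]
    have h5 : ‖y - y'‖ * ‖x m‖ ≤ ‖y - y'‖ := by
      have := hxnorm m
      nlinarith [norm_nonneg (y - y')]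
    linarith
  -- conclude
  have hKsub : K ⊆ {z : X | ⟪y, z⟫ ≤ 0} := by
    rw [hK]
    apply closure_minimal
    · apply convexHull_min
      · rintro z ⟨c, k, hc, hk, rfl⟩
        simp only [Set.mem_setOf_eq, real_inner_smul_right]
        exact mul_nonpos_of_nonneg_of_nonpos hc (hkey k hk)
      · intro z1 h1 z2 h2 a b ha hb hab
        simp only [Set.mem_setOf_eq] at h1 h2 ⊢
        rw [inner_add_right, real_inner_smul_right, real_inner_smul_right]
        nlinarith
    · exact isClosed_le (Continuous.inner continuous_const continuous_id) continuous_const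
  have : ⟪y, y⟫ ≤ 0 := hKsub hy
  exact real_inner_self_nonpos.1 this
end

section
/- Let X, u, a mesh (d_n) with partial sums t_n, and x_n := ρ_n u(t_n) be as in the standing construction. Let n ≥ 1 and let I be a nonempty subset of {1,…,n}, and set δ := max{ |t_i − t_j| : i, j ∈ I }. Then ‖(1/n) ∑_{k=1}^n x_k‖ ≥ (#I / n) · ρ_∞ · exp(−δ^2/2) > 0, where #I is the cardinality of I. -/
/-!
Test the Cesàro mean against the unit vector `u τ`, where `τ` is the midpoint of the times
`t i`, `i ∈ I`. Every `⟪x k, u τ⟫ = ρ k exp (-(t k - τ)²)` is nonnegative, and for `k ∈ I` we have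
`|t k - τ| ≤ δ / 2` and `ρ k ≥ ρ_∞`, so the inner product is at least `(#I / n) ρ_∞ exp (-δ² / 4)`.
-/

open Filter
open scoped RealInnerProductSpace

lemma card_mul_le_norm_sum_of_le_inner {ι E : Type*} [NormedAddCommGroup E]
    [InnerProductSpace ℝ E] {s I : Finset ι} (hIs : I ⊆ s) {v : ι → E} {w : E} (hw : ‖w‖ ≤ 1)
    {c : ℝ} (hI : ∀ k ∈ I, c ≤ ⟪v k, w⟫) (hs : ∀ k ∈ s, 0 ≤ ⟪v k, w⟫) :
    I.card * c ≤ ‖∑ k ∈ s, v k‖ :=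
  calc I.card * c = ∑ _k ∈ I, c := by rw [Finset.sum_const, nsmul_eq_mul]
    _ ≤ ∑ k ∈ I, ⟪v k, w⟫ := Finset.sum_le_sum hI
    _ ≤ ∑ k ∈ s, ⟪v k, w⟫ := Finset.sum_le_sum_of_subset_of_nonneg hIs fun k hk _ => hs k hk
    _ = ⟪∑ k ∈ s, v k, w⟫ := (sum_inner s v w).symm
    _ ≤ ‖∑ k ∈ s, v k‖ * ‖w‖ := real_inner_le_norm _ _
    _ ≤ ‖∑ k ∈ s, v k‖ := mul_le_of_le_one_right (norm_nonneg _) hw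

lemma Finset.exists_mem_Icc_abs_sub_le_half {ι : Type*} {I : Finset ι} (hI : I.Nonempty)
    (f : ι → ℝ) {δ : ℝ} (hδ : ∀ i ∈ I, ∀ j ∈ I, |f i - f j| ≤ δ) :
    ∃ τ ∈ Set.Icc (I.inf' hI f) (I.sup' hI f), ∀ k ∈ I, |f k - τ| ≤ δ / 2 := by
  obtain ⟨i, hi, hmax⟩ := I.exists_mem_eq_sup' hI f
  obtain ⟨j, hj, hmin⟩ := I.exists_mem_eq_inf' hI f
  have hspread := (le_abs_self _).trans (hδ i hi j hj)
  have hle := I.inf'_le f hi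
  refine ⟨(I.inf' hI f + I.sup' hI f) / 2, ⟨by linarith, by linarith⟩, fun k hk => ?_⟩
  have hlo := I.inf'_le f hk
  have hhi := I.le_sup' f hk
  rw [abs_le]
  constructor <;> linarith

lemma sum_Ico_one_le_tsum_succ {f : ℕ → ℝ} (hf : ∀ k, 0 ≤ f k)
    (hsum : Summable fun k => f (k + 1)) (n : ℕ) :
    ∑ k ∈ Finset.Ico 1 n, f k ≤ ∑' k, f (k + 1) := by
  rw [Finset.sum_Ico_eq_sum_range]
  simp only [add_comm 1]
  exact hsum.sum_le_tsum _ fun k _ => hf (k + 1)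

theorem cesaro_lower_bound_general {X : Type*} [NormedAddCommGroup X] [InnerProductSpace ℝ X]
    (u : ℝ → X)
    (hu : ∀ s : ℝ, 0 ≤ s → ∀ t : ℝ, 0 ≤ t → ⟪u s, u t⟫ = Real.exp (-(s - t) ^ 2))
    (d : ℕ → ℝ) (hd : IsMesh d)
    (t : ℕ → ℝ) (ht : ∀ n, t n = ∑ k ∈ Finset.Ico 1 n, d k)
    (ρ : ℕ → ℝ) (hρ : ∀ n, ρ n = Real.exp (-(∑ k ∈ Finset.Ico 1 n, d k ^ 2)))
    (x : ℕ → X) (hx : ∀ n, x n = ρ n • u (t n))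
    (n : ℕ) (hn : 1 ≤ n) (I : Finset ℕ) (hI : I.Nonempty)
    (hIsub : I ⊆ Finset.Icc 1 n)
    (δ : ℝ)
    (hδ : δ = (I ×ˢ I).sup' (hI.product hI) fun p => |t p.1 - t p.2|) :
    0 < (I.card : ℝ) / n * Real.exp (-∑' k : ℕ, d (k + 1) ^ 2) *
        Real.exp (-δ ^ 2 / 2) ∧
    (I.card : ℝ) / n * Real.exp (-∑' k : ℕ, d (k + 1) ^ 2) *
        Real.exp (-δ ^ 2 / 2) ≤
      ‖(1 / (n : ℝ)) • ∑ k ∈ Finset.Icc 1 n, x k‖ := by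
  obtain ⟨hdpos, hdsum, -, -, -⟩ := hd
  have ht_nonneg (k : ℕ) : 0 ≤ t k :=
    ht k ▸ Finset.sum_nonneg fun j hj => (hdpos j (Finset.mem_Ico.1 hj).1).le
  have hρ_ge (k : ℕ) : Real.exp (-∑' j : ℕ, d (j + 1) ^ 2) ≤ ρ k := by
    rw [hρ, Real.exp_le_exp, neg_le_neg_iff]
    exact sum_Ico_one_le_tsum_succ (f := fun k => d k ^ 2) (fun k => sq_nonneg _) hdsum k
  obtain ⟨τ, ⟨hτ_lo, -⟩, hτ⟩ := I.exists_mem_Icc_abs_sub_le_half hI t (δ := δ)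
    fun i hi j hj =>
      hδ ▸ Finset.le_sup' (fun p : ℕ × ℕ => |t p.1 - t p.2|) (Finset.mk_mem_product hi hj)
  have hτ_nonneg : 0 ≤ τ := (Finset.le_inf' hI t fun k _ => ht_nonneg k).trans hτ_lo
  have hinner (k : ℕ) : ⟪x k, u τ⟫ = ρ k * Real.exp (-(t k - τ) ^ 2) := by
    rw [hx, real_inner_smul_left, hu _ (ht_nonneg k) _ hτ_nonneg]
  have hunit : ‖u τ‖ = 1 := by
    rw [norm_eq_sqrt_real_inner, hu _ hτ_nonneg _ hτ_nonneg]
    simp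
  have hbound := card_mul_le_norm_sum_of_le_inner hIsub (v := x) hunit.le
    (c := Real.exp (-∑' j : ℕ, d (j + 1) ^ 2) * Real.exp (-δ ^ 2 / 2))
    (fun k hk => by
      have hclose := abs_le.1 (hτ k hk)
      rw [hinner]
      gcongr
      · exact hρ k ▸ Real.exp_nonneg _
      · exact hρ_ge k
      · nlinarith)
    (fun k _ => by rw [hinner, hρ]; positivity)
  have hn_pos : (0 : ℝ) < n := by exact_mod_cast hn
  refine ⟨by have := hI.card_pos; positivity, ?_⟩
  rw [norm_smul, Real.norm_of_nonneg (by positivity)]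
  calc _ = 1 / n * (I.card * (Real.exp (-∑' j : ℕ, d (j + 1) ^ 2) * Real.exp (-δ ^ 2 / 2))) := by
        ring
    _ ≤ _ := by gcongr

/-- Lower bound for the Cesàro mean: if `I ⊆ {1,…,n}` is nonempty and
`δ = max {|t i − t j| : i, j ∈ I}`, then
`‖(1/n) ∑_{k=1}^n x k‖ ≥ (#I/n) ρ_∞ exp (-δ²/2) > 0`. -/
theorem cesaro_lower_bound {X : Type*} [NormedAddCommGroup X] [InnerProductSpace ℝ X] [CompleteSpace X]
    (u : ℝ → X)
    (hu : ∀ s : ℝ, 0 ≤ s → ∀ t : ℝ, 0 ≤ t → ⟪u s, u t⟫ = Real.exp (-(s - t) ^ 2))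
    (d : ℕ → ℝ) (hd : IsMesh d)
    (t : ℕ → ℝ) (ht : ∀ n, t n = ∑ k ∈ Finset.Ico 1 n, d k)
    (ρ : ℕ → ℝ) (hρ : ∀ n, ρ n = Real.exp (-(∑ k ∈ Finset.Ico 1 n, d k ^ 2)))
    (x : ℕ → X) (hx : ∀ n, x n = ρ n • u (t n))
    (n : ℕ) (hn : 1 ≤ n) (I : Finset ℕ) (hI : I.Nonempty)
    (hIsub : I ⊆ Finset.Icc 1 n)
    (δ : ℝ)
    (hδ : δ = (I ×ˢ I).sup' (hI.product hI) fun p => |t p.1 - t p.2|) :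
    0 < (I.card : ℝ) / n * Real.exp (-∑' k : ℕ, d (k + 1) ^ 2) *
        Real.exp (-δ ^ 2 / 2) ∧
    (I.card : ℝ) / n * Real.exp (-∑' k : ℕ, d (k + 1) ^ 2) *
        Real.exp (-δ ^ 2 / 2) ≤
      ‖(1 / (n : ℝ)) • ∑ k ∈ Finset.Icc 1 n, x k‖ :=
  cesaro_lower_bound_general u hu d hd t ht ρ hρ x hx n hn I hI hIsub δ hδ
end

section
/- Let X and u be as in the standing construction, let δ ∈ (0, 1/8], and take the harmonic mesh d_n := δ/n with partial sums t_n and x_n := ρ_n u(t_n). Then ρ_∞ = exp(−δ^2 π^2/6) > 0, and the Cesàro means y_n := (1/n) ∑_{k=1}^n x_k satisfy: y_n converges weakly to 0 (i.e., ⟨y_n, z⟩ → 0 for every z ∈ X), yet inf_{n ≥ 1} ‖y_n‖ ≥ (1/2) · exp(−(δ^2/6)(π^2 + 3)) > 0; in particular the Cesàro means do not converge strongly to 0. -/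
/-!
Against a generator `u s` the inner products `⟪x k, u s⟫ = ρ k * exp (-(t k - s) ^ 2)` tend to `0`
because `t n ≈ δ log n → ∞`, hence so do their Cesàro means. Since `‖y n‖ ≤ 1` and every `y n` lies
in the span of the `u s`, this extends to the closed span and then to all of `X` by orthogonal
decomposition. On the other hand the mesh is fine enough that `t n - t k ≤ δ log 2` for
`n / 2 < k ≤ n`, so half of the terms of `⟪y n, u (t n)⟫` are at least `ρ_∞ * exp (-δ ^ 2 / 2)`.
-/

open Filter Real Finset Topology
open scoped RealInnerProductSpace

noncomputable def cesaroMean {E : Type*} [AddCommGroup E] [Module ℝ E] (a : ℕ → E) (n : ℕ) : E :=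
  (1 / (n : ℝ)) • ∑ k ∈ Icc 1 n, a k

section CesaroMean

variable {E : Type*}

lemma cesaroMean_mem [AddCommGroup E] [Module ℝ E] (p : Submodule ℝ E) {a : ℕ → E}
    (ha : ∀ k, a k ∈ p) (n : ℕ) : cesaroMean a n ∈ p :=
  p.smul_mem _ (p.sum_mem fun k _ => ha k)

lemma norm_cesaroMean_le [SeminormedAddCommGroup E] [NormedSpace ℝ E] {a : ℕ → E} {M : ℝ}
    (ha : ∀ k, ‖a k‖ ≤ M) (n : ℕ) : ‖cesaroMean a n‖ ≤ M := by
  rcases n.eq_zero_or_pos with rfl | hn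
  · simpa [cesaroMean] using (norm_nonneg _).trans (ha 0)
  have hn' : (0 : ℝ) < n := Nat.cast_pos.2 hn
  calc ‖cesaroMean a n‖ ≤ 1 / n * ∑ k ∈ Icc 1 n, ‖a k‖ := by
        rw [cesaroMean, norm_smul, Real.norm_of_nonneg (by positivity)]
        gcongr
        exact norm_sum_le _ _
    _ ≤ 1 / n * (n * M) := by
        gcongr
        simpa using sum_le_sum fun k (_ : k ∈ Icc 1 n) => ha k
    _ = M := by field_simp

lemma inner_cesaroMean_left [NormedAddCommGroup E] [InnerProductSpace ℝ E] (a : ℕ → E)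
    (z : E) (n : ℕ) : ⟪cesaroMean a n, z⟫ = cesaroMean (fun k => ⟪a k, z⟫) n := by
  simp only [cesaroMean, real_inner_smul_left, sum_inner, smul_eq_mul]

theorem Filter.Tendsto.cesaroMean [NormedAddCommGroup E] [NormedSpace ℝ E] {a : ℕ → E} {l : E}
    (h : Tendsto a atTop (𝓝 l)) : Tendsto (cesaroMean a) atTop (𝓝 l) := by
  refine (h.comp (tendsto_add_atTop_nat 1)).cesaro_smul.congr fun n => ?_
  simp only [_root_.cesaroMean, one_div, Function.comp_def, range_eq_Ico, sum_Ico_add' a 0 n 1,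
    zero_add, Ico_add_one_right_eq_Icc]

lemma div_two_le_cesaroMean {f : ℕ → ℝ} {c : ℝ} {n : ℕ} (hn : 1 ≤ n) (hf : ∀ k, 0 ≤ f k)
    (hc0 : 0 ≤ c) (hc : ∀ k ∈ Icc (n / 2 + 1) n, c ≤ f k) : c / 2 ≤ cesaroMean f n := by
  have hn' : (0 : ℝ) < n := by exact_mod_cast hn
  have hcard : (n : ℝ) ≤ 2 * (#(Icc (n / 2 + 1) n) : ℕ) := by
    rw [Nat.card_Icc]; norm_cast; omega
  have hsum : #(Icc (n / 2 + 1) n) • c ≤ ∑ k ∈ Icc 1 n, f k :=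
    (card_nsmul_le_sum _ _ _ hc).trans
      (sum_le_sum_of_subset_of_nonneg (Icc_subset_Icc (by omega) le_rfl) fun k _ _ => hf k)
  rw [nsmul_eq_mul] at hsum
  rw [cesaroMean, smul_eq_mul, div_mul_eq_mul_div, one_mul, le_div_iff₀ hn']
  nlinarith

end CesaroMean

theorem tendsto_inner_zero_of_mem_span {X ι : Type*} [NormedAddCommGroup X]
    [InnerProductSpace ℝ X] [CompleteSpace X] {l : Filter ι} {S : Set X} {y : ι → X} {C : ℝ}
    (hyS : ∀ i, y i ∈ Submodule.span ℝ S) (hC : ∀ i, ‖y i‖ ≤ C)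
    (hS : ∀ v ∈ S, Tendsto (fun i => ⟪y i, v⟫) l (𝓝 0)) (z : X) :
    Tendsto (fun i => ⟪y i, z⟫) l (𝓝 0) := by
  set K := (Submodule.span ℝ S).topologicalClosure
  have hequi : Equicontinuous fun i => (innerSL ℝ (y i) : X → ℝ) :=
    ((NormedSpace.equicontinuous_TFAE fun i => innerSL ℝ (y i)).out 5 1).1
      (⟨C, fun i => (innerSL_apply_norm ℝ (y i)).trans_le (hC i)⟩ : ∃ C, ∀ i, _ ≤ C)
  have hclosed : IsClosed {v : X | Tendsto (fun i => ⟪y i, v⟫) l (𝓝 0)} :=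
    hequi.isClosed_setOfPred_tendsto continuous_const
  have hspan : ∀ v ∈ Submodule.span ℝ S, Tendsto (fun i => ⟪y i, v⟫) l (𝓝 0) := by
    intro v hv
    induction hv using Submodule.span_induction with
    | mem v hv => exact hS v hv
    | zero => simpa using tendsto_const_nhds
    | add v w _ _ hv hw => simpa [inner_add_right] using hv.add hw
    | smul c v _ hv => simpa [real_inner_smul_right] using hv.const_mul c
  have hK : ∀ v ∈ K, Tendsto (fun i => ⟪y i, v⟫) l (𝓝 0) :=
    fun v hv => closure_minimal hspan hclosed hv
  obtain ⟨v, hv, w, hw, rfl⟩ := K.exists_add_mem_mem_orthogonal z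
  have hyw (i : ι) : ⟪y i, w⟫ = 0 :=
    (K.mem_orthogonal w).1 hw _ ((Submodule.span ℝ S).le_topologicalClosure (hyS i))
  simpa [inner_add_right, hyw] using hK v hv

section GaussianCurve

variable {X : Type*} [NormedAddCommGroup X] [InnerProductSpace ℝ X] {u : ℝ → X}

lemma norm_eq_one_of_inner_eq_exp
    (hu : ∀ s : ℝ, 0 ≤ s → ∀ t : ℝ, 0 ≤ t → ⟪u s, u t⟫ = exp (-(s - t) ^ 2))
    {s : ℝ} (hs : 0 ≤ s) : ‖u s‖ = 1 := by
  have h := hu s hs s hs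
  rw [sub_self, real_inner_self_eq_norm_sq] at h
  simpa [pow_eq_one_iff_of_nonneg (norm_nonneg _)] using h

theorem tendsto_inner_cesaroMean_smul_zero [CompleteSpace X]
    (hu : ∀ s : ℝ, 0 ≤ s → ∀ t : ℝ, 0 ≤ t → ⟪u s, u t⟫ = exp (-(s - t) ^ 2))
    {t : ℕ → ℝ} (ht0 : ∀ k, 0 ≤ t k) (ht : Tendsto t atTop atTop)
    {ρ : ℕ → ℝ} {M : ℝ} (hρ : ∀ k, |ρ k| ≤ M) (z : X) :
    Tendsto (fun n => ⟪cesaroMean (fun k => ρ k • u (t k)) n, z⟫) atTop (𝓝 0) := by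
  refine tendsto_inner_zero_of_mem_span (S := u '' Set.Ici 0) (C := M)
    (cesaroMean_mem _ fun k => Submodule.smul_mem _ _ (Submodule.subset_span ⟨t k, ht0 k, rfl⟩))
    (norm_cesaroMean_le fun k => ?_) ?_ z
  · rw [norm_smul, norm_eq_one_of_inner_eq_exp hu (ht0 k), mul_one]
    exact hρ k
  rintro _ ⟨s, hs, rfl⟩
  simp_rw [inner_cesaroMean_left]
  refine Tendsto.cesaroMean ?_
  have hexp : Tendsto (fun k => exp (-(t k - s) ^ 2)) atTop (𝓝 0) :=
    tendsto_exp_atBot.comp <| tendsto_neg_atTop_atBot.comp <|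
      (tendsto_pow_atTop two_ne_zero).comp (tendsto_atTop_add_const_right _ (-s) ht)
  refine squeeze_zero_norm (fun k => ?_) (by simpa using hexp.const_mul M)
  rw [real_inner_smul_left, hu _ (ht0 k) _ hs, norm_mul, norm_of_nonneg (exp_pos _).le]
  exact mul_le_mul_of_nonneg_right (hρ k) (exp_pos _).le

theorem div_two_le_norm_cesaroMean_smul
    (hu : ∀ s : ℝ, 0 ≤ s → ∀ t : ℝ, 0 ≤ t → ⟪u s, u t⟫ = exp (-(s - t) ^ 2))
    {t : ℕ → ℝ} (ht0 : ∀ k, 0 ≤ t k) {ρ : ℕ → ℝ} (hρ : ∀ k, 0 ≤ ρ k) {c : ℝ} (hc0 : 0 ≤ c)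
    {n : ℕ} (hn : 1 ≤ n) (hc : ∀ k ∈ Icc (n / 2 + 1) n, c ≤ ρ k * exp (-(t k - t n) ^ 2)) :
    c / 2 ≤ ‖cesaroMean (fun k => ρ k • u (t k)) n‖ :=
  calc c / 2 ≤ cesaroMean (fun k => ρ k * exp (-(t k - t n) ^ 2)) n :=
        div_two_le_cesaroMean hn (fun k => mul_nonneg (hρ k) (exp_pos _).le) hc0 hc
    _ = ⟪cesaroMean (fun k => ρ k • u (t k)) n, u (t n)⟫ := by
        simp only [inner_cesaroMean_left, real_inner_smul_left, hu _ (ht0 _) _ (ht0 n)]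
    _ ≤ ‖cesaroMean (fun k => ρ k • u (t k)) n‖ * ‖u (t n)‖ := real_inner_le_norm _ _
    _ = ‖cesaroMean (fun k => ρ k • u (t k)) n‖ := by
        rw [norm_eq_one_of_inner_eq_exp hu (ht0 n), mul_one]

end GaussianCurve

lemma sum_Ico_succ_inv_le_log {m n : ℕ} (hm : 0 < m) (hmn : m ≤ n) :
    ∑ j ∈ Ico (m + 1) (n + 1), (j : ℝ)⁻¹ ≤ log (n / m) := by
  induction n, hmn using Nat.le_induction with
  | base => simp [hm.ne']
  | succ n hmn ih =>
    have hn : (0 : ℝ) < n := by exact_mod_cast hm.trans_le hmn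
    have hstep : ((n + 1 : ℕ) : ℝ)⁻¹ ≤ log ((n + 1 : ℕ) / n) := by
      refine le_of_eq_of_le ?_ (one_sub_inv_le_log_of_pos (by positivity))
      push_cast
      field_simp
      ring
    rw [sum_Ico_succ_top (by omega), ← div_mul_div_cancel₀ hn.ne',
      log_mul (by positivity) (by positivity), add_comm (log _)]
    exact add_le_add ih hstep

lemma sum_Ico_inv_le_log_two {k n : ℕ} (hk : n / 2 < k) :
    ∑ j ∈ Ico k n, (j : ℝ)⁻¹ ≤ log 2 := by
  rcases le_or_gt n k with hnk | hkn
  · rw [Ico_eq_empty_of_le hnk, sum_empty]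
    exact log_nonneg one_le_two
  obtain ⟨m, rfl⟩ : ∃ m, k = m + 1 := ⟨k - 1, by omega⟩
  obtain ⟨n, rfl⟩ : ∃ n', n = n' + 1 := ⟨n - 1, by omega⟩
  have hm : 0 < m := by omega
  have hn : (0 : ℝ) < n := by exact_mod_cast (by omega : 0 < n)
  refine (sum_Ico_succ_inv_le_log hm (by omega)).trans (log_le_log (by positivity) ?_)
  rw [div_le_iff₀ (by positivity)]
  exact_mod_cast (by omega : n ≤ 2 * m)

noncomputable def harmonicTime (δ : ℝ) (n : ℕ) : ℝ :=
  ∑ k ∈ Ico 1 n, δ / k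

section HarmonicTime

variable {δ : ℝ}

lemma harmonicTime_nonneg (hδ : 0 ≤ δ) (n : ℕ) : 0 ≤ harmonicTime δ n :=
  sum_nonneg fun k _ => by positivity

lemma tendsto_harmonicTime_atTop (hδ : 0 < δ) : Tendsto (harmonicTime δ) atTop atTop := by
  have hrange : harmonicTime δ = fun n => ∑ k ∈ range n, δ / k := by
    funext n
    refine sum_subset (fun k hk => by simp at hk ⊢; omega) fun k _ hk => ?_
    obtain rfl : k = 0 := by simp at *; omega
    simp
  rw [hrange, ← not_summable_iff_tendsto_nat_atTop_of_nonneg fun k => by positivity]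
  simpa [div_eq_mul_one_div δ, summable_mul_left_iff hδ.ne'] using not_summable_one_div_natCast

lemma sq_harmonicTime_sub_le (hδ : 0 ≤ δ) {k n : ℕ} (hk : n / 2 < k) (hkn : k ≤ n) :
    (harmonicTime δ k - harmonicTime δ n) ^ 2 ≤ δ ^ 2 / 2 := by
  have hdiff : harmonicTime δ n - harmonicTime δ k = δ * ∑ j ∈ Ico k n, (j : ℝ)⁻¹ := by
    rw [harmonicTime, harmonicTime, ← sum_Ico_consecutive _ (by omega : 1 ≤ k) hkn,
      add_sub_cancel_left, mul_sum]
    simp only [div_eq_mul_inv]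
  have hlog2 : log 2 ^ 2 ≤ 1 / 2 := by nlinarith [log_two_lt_d9, log_nonneg one_le_two]
  calc (harmonicTime δ k - harmonicTime δ n) ^ 2 = (δ * ∑ j ∈ Ico k n, (j : ℝ)⁻¹) ^ 2 := by
        rw [← hdiff]; ring
    _ ≤ (δ * log 2) ^ 2 := by
        gcongr
        exact sum_Ico_inv_le_log_two hk
    _ ≤ δ ^ 2 / 2 := by nlinarith [sq_nonneg δ]

end HarmonicTime

/-- The `k = 0` term is `(δ / 0) ^ 2 = 0`. -/
lemma hasSum_div_natCast_sq (δ : ℝ) : HasSum (fun k : ℕ => (δ / k) ^ 2) (δ ^ 2 * π ^ 2 / 6) := by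
  simpa only [mul_one_div, div_pow, mul_div_assoc] using hasSum_zeta_two.mul_left (δ ^ 2)

theorem harmonic_cesaro_not_strong_general
    {X : Type*} [NormedAddCommGroup X] [InnerProductSpace ℝ X] [CompleteSpace X]
    (u : ℝ → X)
    (hu : ∀ s : ℝ, 0 ≤ s → ∀ t : ℝ, 0 ≤ t → ⟪u s, u t⟫ = Real.exp (-(s - t) ^ 2))
    (δ : ℝ) (hδ0 : 0 < δ)
    (d : ℕ → ℝ) (hd : ∀ n : ℕ, d n = δ / n)
    (t : ℕ → ℝ) (ht : ∀ n, t n = ∑ k ∈ Finset.Ico 1 n, d k)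
    (ρ : ℕ → ℝ) (hρ : ∀ n, ρ n = Real.exp (-(∑ k ∈ Finset.Ico 1 n, d k ^ 2)))
    (x : ℕ → X) (hx : ∀ n, x n = ρ n • u (t n))
    (y : ℕ → X) (hy : ∀ n, y n = (1 / (n : ℝ)) • ∑ k ∈ Finset.Icc 1 n, x k) :
    Real.exp (-∑' k : ℕ, d (k + 1) ^ 2) = Real.exp (-(δ ^ 2 * π ^ 2 / 6)) ∧
    0 < Real.exp (-(δ ^ 2 * π ^ 2 / 6)) ∧
    (∀ z : X, Tendsto (fun n : ℕ => ⟪y n, z⟫) atTop (nhds 0)) ∧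
    (∀ n : ℕ, 1 ≤ n →
      1 / 2 * Real.exp (-(δ ^ 2 / 6 * (π ^ 2 + 3))) ≤ ‖y n‖) ∧
    0 < 1 / 2 * Real.exp (-(δ ^ 2 / 6 * (π ^ 2 + 3))) := by
  simp only [hd] at ht hρ ⊢
  obtain rfl : t = harmonicTime δ := funext ht
  obtain rfl : x = fun k => ρ k • u (harmonicTime δ k) := funext hx
  obtain rfl : y = cesaroMean fun k => ρ k • u (harmonicTime δ k) := funext hy
  have hsq := hasSum_div_natCast_sq δ
  have hρ_pos (n : ℕ) : 0 < ρ n := hρ n ▸ exp_pos _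
  have hρ_le_one (n : ℕ) : ρ n ≤ 1 := by
    rw [hρ, exp_le_one_iff, neg_nonpos]
    positivity
  have hρ_ge (n : ℕ) : exp (-(δ ^ 2 * π ^ 2 / 6)) ≤ ρ n := by
    rw [hρ, exp_le_exp, neg_le_neg_iff]
    exact sum_le_hasSum _ (fun k _ => sq_nonneg _) hsq
  have ht0 := harmonicTime_nonneg hδ0.le
  refine ⟨?_, exp_pos _, tendsto_inner_cesaroMean_smul_zero hu ht0
    (tendsto_harmonicTime_atTop hδ0) fun k => (abs_of_pos (hρ_pos k)).trans_le (hρ_le_one k),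
    fun n hn => ?_, by positivity⟩
  · rw [((hasSum_nat_add_iff' 1).2 hsq).tsum_eq]
    simp
  · have hexp : exp (-(δ ^ 2 / 6 * (π ^ 2 + 3))) =
        exp (-(δ ^ 2 * π ^ 2 / 6)) * exp (-(δ ^ 2 / 2)) := by
      rw [← exp_add]; ring_nf
    rw [hexp, one_div_mul_eq_div]
    refine div_two_le_norm_cesaroMean_smul hu ht0 (fun k => (hρ_pos k).le) (by positivity) hn
      fun k hk => ?_
    rw [mem_Icc] at hk
    exact mul_le_mul (hρ_ge k) (exp_le_exp.2 (neg_le_neg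
      (sq_harmonicTime_sub_le hδ0.le (by omega) hk.2))) (exp_pos _).le (hρ_pos k).le

/-- Harmonic mesh `d n = δ/n` with `δ ∈ (0,1/8]`:
`ρ_∞ = exp (-δ²π²/6) > 0`, and the Cesàro means
`y n = (1/n) ∑_{k=1}^n x k` converge weakly to `0` yet satisfy
`‖y n‖ ≥ (1/2) exp (-(δ²/6)(π² + 3)) > 0` for all `n ≥ 1`. -/
theorem harmonic_cesaro_not_strong
    {X : Type*} [NormedAddCommGroup X] [InnerProductSpace ℝ X] [CompleteSpace X]
    (u : ℝ → X)
    (hu : ∀ s : ℝ, 0 ≤ s → ∀ t : ℝ, 0 ≤ t → ⟪u s, u t⟫ = Real.exp (-(s - t) ^ 2))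
    (δ : ℝ) (hδ0 : 0 < δ) (hδ1 : δ ≤ 1 / 8)
    (d : ℕ → ℝ) (hd : ∀ n : ℕ, d n = δ / n)
    (t : ℕ → ℝ) (ht : ∀ n, t n = ∑ k ∈ Finset.Ico 1 n, d k)
    (ρ : ℕ → ℝ) (hρ : ∀ n, ρ n = Real.exp (-(∑ k ∈ Finset.Ico 1 n, d k ^ 2)))
    (x : ℕ → X) (hx : ∀ n, x n = ρ n • u (t n))
    (y : ℕ → X) (hy : ∀ n, y n = (1 / (n : ℝ)) • ∑ k ∈ Finset.Icc 1 n, x k) :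
    Real.exp (-∑' k : ℕ, d (k + 1) ^ 2) = Real.exp (-(δ ^ 2 * π ^ 2 / 6)) ∧
    0 < Real.exp (-(δ ^ 2 * π ^ 2 / 6)) ∧
    (∀ z : X, Tendsto (fun n : ℕ => ⟪y n, z⟫) atTop (nhds 0)) ∧
    (∀ n : ℕ, 1 ≤ n →
      1 / 2 * Real.exp (-(δ ^ 2 / 6 * (π ^ 2 + 3))) ≤ ‖y n‖) ∧
    0 < 1 / 2 * Real.exp (-(δ ^ 2 / 6 * (π ^ 2 + 3))) :=
  harmonic_cesaro_not_strong_general u hu δ hδ0 d hd t ht ρ hρ x hx y hy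
end
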